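/- Let (W,S) be a Coxeter system of type (4,4,4) with S = {r,s,t} and let w ∈ W with ℓ(w·rstr) = ℓ(w) + 4 (so that (w, wr, wrs, wrst, wrstr) is a minimal gallery of type (r,s,t,r)). Let β_1 = w·α_r, β_2 = wr·α_s, β_3 = wrs·α_t, β_4 = wrst·α_r be the roots crossed by this gallery. Then β_1 ⊊ β_3 and β_1 ⊊ β_4. -/

import Mathlib

open CoxeterSystem

/-- The Coxeter matrix of type `(4,4,4)`. -/
def M444 : CoxeterMatrix (Fin 3) where
  M := fun i j => if i = j then 1 else 4
  isSymm := by
    ext i j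
    by_cases h : i = j <;> simp [Matrix.transpose, h, eq_comm]
  diagonal := fun i => by simp
  off_diagonal := fun i j h => by simp [h]

variable {W : Type} [Group W]

/-- Left translation of a subset of `W`. -/
def wmul (v : W) (A : Set W) : Set W := (v * ·) '' A

/-- The simple root `α_u = {w ∈ W : ℓ(uw) > ℓ(w)}`. -/
def simpleRoot (cs : CoxeterSystem M444 W) (u : Fin 3) : Set W :=
  {w : W | cs.length (cs.simple u * w) > cs.length w}

/-!
Roots are modelled in the geometric representation `ρ : W → GL₃(ℤ[√2])`, with
`B(e_i, e_j) = -2 cos (π / 4) = -√2` for `i ≠ j`: the root `v·α_u` is the set of `y` with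
`ρ(y⁻¹ v) e_u ≥ 0`. Tits' positivity lemma (by reduction to the dihedral subgroups) shows that
every root vector is `≥ 0` or `≤ 0`, and the positive roots made negative by a fixed `x` form a
finite set.
If two positive roots `α, β` satisfy `B(α, β) ≤ -2`, the product of their reflections moves `α`
along an infinite sequence of positive roots in the cone spanned by `α` and `β`, so no `x` can make
both negative. For `α = e_r` and `β = σ_s e_t`, resp. `β = σ_s σ_t e_r`, one has
`B(α, β) = -(2 + √2)`, resp. `-(2 + 2√2)`; translating by `r` gives `α_r ⊆ rs·α_t` and
`α_r ⊆ rst·α_r`, left translation by `w` preserves inclusions, and the chambers `wrs`, `wrst`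
lie in `β₃`, resp. `β₄`, but not in `β₁`.
-/

namespace CoxeterSystem

variable {B : Type*} {M : CoxeterMatrix B} (cs : CoxeterSystem M W)

theorem exists_eq_mul_wordProd_not_isRightDescent (i j : B) (w : W) :
    ∃ v ω, (∀ l ∈ ω, l = i ∨ l = j) ∧ w = v * cs.wordProd ω ∧
      cs.length w = cs.length v + ω.length ∧
      ¬ cs.IsRightDescent v i ∧ ¬ cs.IsRightDescent v j := by
  induction hn : cs.length w using Nat.strong_induction_on generalizing w with
  | _ n ih =>
    by_cases hd : ∃ k, (k = i ∨ k = j) ∧ cs.IsRightDescent w k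
    · obtain ⟨k, hk, hdesc⟩ := hd
      have hlen := cs.isRightDescent_iff.mp hdesc
      obtain ⟨v, ω, hω, hv, hvlen, hvi, hvj⟩ := ih _ (by omega) (w * cs.simple k) rfl
      refine ⟨v, ω ++ [k], ?_, ?_, ?_, hvi, hvj⟩
      · simpa [or_imp, forall_and] using ⟨hω, hk⟩
      · rw [cs.wordProd_append, cs.wordProd_singleton, ← mul_assoc, ← hv,
          cs.simple_mul_simple_cancel_right]
      · simp only [List.length_append, List.length_singleton]
        omega
    · push Not at hd
      exact ⟨w, [], by simp, by simp, by simp [hn], hd i (.inl rfl), hd j (.inr rfl)⟩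

theorem simple_alternating_four_comm {i j : B} (hij : M i j = 4) :
    cs.simple i * cs.simple j * cs.simple i * cs.simple j =
      cs.simple j * cs.simple i * cs.simple j * cs.simple i := by
  have h := cs.wordProd_braidWord_eq i j
  rw [braidWord, braidWord, M.symmetric j i, hij] at h
  simpa only [alternatingWord, List.concat_eq_append, cs.wordProd_append,
    cs.wordProd_singleton, cs.wordProd_nil, one_mul] using h

theorem wordProd_mem_of_coxeterMatrix_eq_four {i j : B} (hij : M i j = 4) {ω : List B}
    (hω : ∀ l ∈ ω, l = i ∨ l = j) :
    cs.wordProd ω ∈ ({1, cs.simple i, cs.simple j, cs.simple i * cs.simple j,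
      cs.simple j * cs.simple i, cs.simple i * cs.simple j * cs.simple i,
      cs.simple j * cs.simple i * cs.simple j,
      cs.simple i * cs.simple j * cs.simple i * cs.simple j} : Set W) := by
  have hbraid := cs.simple_alternating_four_comm hij
  induction ω with
  | nil => simp
  | cons l ω ih =>
    rw [cs.wordProd_cons]
    rcases hω l List.mem_cons_self with rfl | rfl <;>
      rcases ih (fun x hx => hω x (List.mem_cons_of_mem _ hx)) with
        h | h | h | h | h | h | h | h <;> rw [h] <;>
      simp only [← mul_assoc, cs.simple_mul_simple_self, mul_one,
        cs.simple_mul_simple_cancel_left, Set.mem_insert_iff, Set.mem_singleton_iff] <;>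
      first
        | tauto
        | (rw [← hbraid]; simp only [cs.simple_mul_simple_cancel_right]; tauto)

theorem exists_eq_simple_mul_simple_of_length_eq_two {w : W} (hw : cs.length w = 2) :
    ∃ k l, w = cs.simple k * cs.simple l := by
  obtain ⟨ω, hω, rfl⟩ := cs.exists_isReduced w
  obtain ⟨k, l, rfl⟩ := List.length_eq_two.mp (hω.symm.trans hw)
  exact ⟨k, l, by simp [cs.wordProd_cons]⟩

end CoxeterSystem

theorem mem_wmul {v y : W} {A : Set W} : y ∈ wmul v A ↔ v⁻¹ * y ∈ A :=
  ⟨by rintro ⟨a, ha, rfl⟩; simpa, fun h => ⟨_, h, mul_inv_cancel_left v y⟩⟩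

namespace M444

open Matrix
open Zsqrtd (sqrtd Nonsquare)

local notation "ℤ√2" => ℤ√(2 : ℕ)

instance : Nonsquare 2 :=
  ⟨fun n => by match n with | 0 => decide | 1 => decide | n + 2 => intro h; nlinarith⟩

abbrev V : Type := Fin 3 → ℤ√2

instance : DecidableRel (α := V) (· ≤ ·) := fun _ _ => decidable_of_iff _ Pi.le_def.symm

def e (i : Fin 3) : V := Pi.single i 1

/-- The Tits form: `B(e i, e j) = -2 cos (π / M444 i j)`. -/
def gram : Matrix (Fin 3) (Fin 3) (ℤ√2) := of fun k l => if k = l then 2 else -sqrtd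

def bilin (x y : V) : ℤ√2 := x ⬝ᵥ gram *ᵥ y

def refl (i : Fin 3) : Matrix (Fin 3) (Fin 3) (ℤ√2) := 1 - vecMulVec (e i) (gram i)

theorem isLiftable_refl : M444.IsLiftable refl := by
  unfold CoxeterMatrix.IsLiftable; decide

theorem refl_transpose_mul_gram_mul_refl (i : Fin 3) : (refl i)ᵀ * gram * refl i = gram := by
  revert i; decide

theorem bilin_e_self (i : Fin 3) : bilin (e i) (e i) = 2 := by
  revert i; decide

theorem sqrtd_nonneg : 0 ≤ (sqrtd : ℤ√2) := by decide

theorem e_nonneg (i : Fin 3) : 0 ≤ e i := Pi.single_nonneg.2 zero_le_one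

theorem refl_mulVec_e_self (i : Fin 3) : refl i *ᵥ e i = -e i := by
  revert i; decide

theorem refl_mulVec_e_of_ne {i j : Fin 3} (hij : i ≠ j) :
    refl j *ᵥ e i = e i + (sqrtd : ℤ√2) • e j := by
  revert i j; decide

theorem refl_mul_refl_mulVec_e {i j : Fin 3} (hij : i ≠ j) :
    (refl i * refl j) *ᵥ e i = e i + (sqrtd : ℤ√2) • e j := by
  revert i j; decide

theorem refl_mul_refl_mul_refl_mulVec_e {i j : Fin 3} (hij : i ≠ j) :
    (refl j * refl i * refl j) *ᵥ e i = e i := by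
  revert i j; decide

theorem refl_alternating_four_ne_one {i j : Fin 3} (hij : i ≠ j) :
    refl i * refl j * refl i * refl j ≠ 1 := by
  revert i j; decide

theorem refl_alternating_four_ne_refl_mul_refl {i j : Fin 3} (hij : i ≠ j) (k l : Fin 3) :
    refl i * refl j * refl i * refl j ≠ refl k * refl l := by
  revert i j k l; decide

theorem gram_transpose : gramᵀ = gram := by decide

theorem bilin_comm (x y : V) : bilin x y = bilin y x := by
  rw [bilin, bilin, dotProduct_mulVec, ← mulVec_transpose, gram_transpose, dotProduct_comm]

theorem bilin_add_smul_right (x y z : V) (a b : ℤ√2) :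
    bilin x (a • y + b • z) = a * bilin x y + b * bilin x z := by
  simp only [bilin, mulVec_add, mulVec_smul, dotProduct_add, dotProduct_smul, smul_eq_mul]

theorem bilin_smul_smul (x y : V) (a b : ℤ√2) : bilin (a • x) (b • y) = a * b * bilin x y := by
  simp only [bilin, mulVec_smul, dotProduct_smul, smul_dotProduct, smul_eq_mul]
  ring

theorem bilin_refl_mulVec (i : Fin 3) (x y : V) :
    bilin (refl i *ᵥ x) (refl i *ᵥ y) = bilin x y := by
  rw [bilin, mulVec_mulVec, dotProduct_mulVec, ← vecMul_transpose, vecMul_vecMul, ← mul_assoc,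
    refl_transpose_mul_gram_mul_refl, ← dotProduct_mulVec, bilin]

def reflect (γ v : V) : V := v - bilin γ v • γ

theorem refl_mulVec_eq_reflect (i : Fin 3) (v : V) : refl i *ᵥ v = reflect (e i) v := by
  simp [refl, reflect, bilin, sub_mulVec, vecMulVec_mulVec, e, mulVec, dotProduct_comm]

theorem reflect_reflect_add_smul {α β : V} {c : ℤ√2} (hα : bilin α α = 2) (hβ : bilin β β = 2)
    (hαβ : bilin α β = -c) (a b : ℤ√2) :
    reflect α (reflect β (a • α + b • β)) = (c * (a * c - b) - a) • α + (a * c - b) • β := by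
  have hβα : bilin β α = -c := by rw [bilin_comm, hαβ]
  have h : reflect β (a • α + b • β) = a • α + (a * c - b) • β := by
    rw [reflect, bilin_add_smul_right, hβα, hβ]
    module
  rw [h, reflect, bilin_add_smul_right, hα, hαβ]
  module

theorem exists_reflect_reflect_eq_of_lt {α β : V} {c : ℤ√2} (hα : bilin α α = 2)
    (hβ : bilin β β = 2) (hαβ : bilin α β = -c) (hc : 2 ≤ c) {a b : ℤ√2} (hb : 0 ≤ b)
    (hba : b < a) :
    ∃ a' b', 0 ≤ b' ∧ b' < a' ∧ a < a' ∧ b ≤ b' ∧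
      reflect α (reflect β (a • α + b • β)) = a' • α + b' • β := by
  have ha : 0 ≤ a := hb.trans hba.le
  have hb' : 2 * a - b ≤ a * c - b := by nlinarith [mul_nonneg (sub_nonneg.2 hc) ha]
  have ha' : 2 * (a * c - b) - a ≤ c * (a * c - b) - a := by
    nlinarith [mul_nonneg (sub_nonneg.2 hc) (show 0 ≤ a * c - b by linarith)]
  exact ⟨_, _, by linarith, by linarith, by linarith, by linarith,
    reflect_reflect_add_smul hα hβ hαβ a b⟩

variable (cs : CoxeterSystem M444 W)

def geomRep : W →* Matrix (Fin 3) (Fin 3) ℤ√2 := cs.lift ⟨refl, isLiftable_refl⟩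

local notation "ρ" => geomRep cs

theorem geomRep_simple (i : Fin 3) : ρ (cs.simple i) = refl i :=
  cs.lift_apply_simple isLiftable_refl i

theorem apply_of_ne {i j : Fin 3} (hij : i ≠ j) : M444 i j = 4 := by
  simp [M444, hij]

theorem length_simple_alternating_four {i j : Fin 3} (hij : i ≠ j) :
    cs.length (cs.simple i * cs.simple j * cs.simple i * cs.simple j) = 4 := by
  have hle := cs.length_wordProd_le [i, j, i, j]
  have hpar := cs.length_mul_mod_two (cs.simple i * cs.simple j) (cs.simple i * cs.simple j)
  simp only [cs.wordProd_cons, cs.wordProd_nil, List.length_cons, List.length_nil, mul_one,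
    ← mul_assoc] at hle hpar
  have h0 : cs.length (cs.simple i * cs.simple j * cs.simple i * cs.simple j) ≠ 0 := fun h =>
    refl_alternating_four_ne_one hij <| by
      simpa only [map_mul, map_one, geomRep_simple] using congrArg ρ (cs.length_eq_zero_iff.mp h)
  have h2 : cs.length (cs.simple i * cs.simple j * cs.simple i * cs.simple j) ≠ 2 := fun h => by
    obtain ⟨k, l, hx⟩ := cs.exists_eq_simple_mul_simple_of_length_eq_two h
    exact refl_alternating_four_ne_refl_mul_refl hij k l
      (by simpa only [map_mul, geomRep_simple] using congrArg ρ hx)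
  omega

theorem length_simple_alternating_three {i j : Fin 3} (hij : i ≠ j) :
    cs.length (cs.simple i * cs.simple j * cs.simple i) = 3 := by
  have h4 := length_simple_alternating_four cs hij
  have h3 := cs.length_mul_le (cs.simple i * cs.simple j * cs.simple i) (cs.simple j)
  have h2 := cs.length_mul_le (cs.simple i * cs.simple j) (cs.simple i)
  have h1 := cs.length_mul_le (cs.simple i) (cs.simple j)
  simp only [cs.length_simple] at h1 h2 h3
  omega

theorem length_simple_mul_simple {i j : Fin 3} (hij : i ≠ j) :
    cs.length (cs.simple i * cs.simple j) = 2 := by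
  have h3 := length_simple_alternating_three cs hij
  have h2 := cs.length_mul_le (cs.simple i * cs.simple j) (cs.simple i)
  have h1 := cs.length_mul_le (cs.simple i) (cs.simple j)
  simp only [cs.length_simple] at h1 h2
  omega

theorem exists_geomRep_mulVec_e_eq_of_mem_dihedral {i j : Fin 3} (hij : i ≠ j) {u : W}
    (hu : u ∈ ({1, cs.simple i, cs.simple j, cs.simple i * cs.simple j,
      cs.simple j * cs.simple i, cs.simple i * cs.simple j * cs.simple i,
      cs.simple j * cs.simple i * cs.simple j,
      cs.simple i * cs.simple j * cs.simple i * cs.simple j} : Set W))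
    (hlen : cs.length u < cs.length (u * cs.simple i)) :
    ∃ a b : ℤ√2, 0 ≤ a ∧ 0 ≤ b ∧ ρ u *ᵥ e i = a • e i + b • e j := by
  simp only [Set.mem_insert_iff, Set.mem_singleton_iff] at hu
  rcases hu with rfl | rfl | rfl | rfl | rfl | rfl | rfl | rfl
  · exact ⟨1, 0, zero_le_one, le_rfl, by simp⟩
  · simp at hlen
  · exact ⟨1, sqrtd, zero_le_one, sqrtd_nonneg, by
      rw [geomRep_simple, refl_mulVec_e_of_ne hij, one_smul]⟩
  · exact ⟨1, sqrtd, zero_le_one, sqrtd_nonneg, by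
      rw [map_mul, geomRep_simple, geomRep_simple, refl_mul_refl_mulVec_e hij, one_smul]⟩
  · rw [cs.simple_mul_simple_cancel_right, cs.length_simple,
      length_simple_mul_simple cs hij.symm] at hlen
    omega
  · rw [cs.simple_mul_simple_cancel_right, length_simple_mul_simple cs hij,
      length_simple_alternating_three cs hij] at hlen
    omega
  · exact ⟨1, 0, zero_le_one, le_rfl, by
      rw [map_mul, map_mul, geomRep_simple, geomRep_simple, refl_mul_refl_mul_refl_mulVec_e hij,
        one_smul, zero_smul, add_zero]⟩
  · rw [cs.simple_alternating_four_comm (apply_of_ne hij), cs.simple_mul_simple_cancel_right,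
      length_simple_alternating_three cs hij.symm,
      length_simple_alternating_four cs hij.symm] at hlen
    omega

/-- Tits: for a right descent `j` of `w`, write `w = v u` with `u` in the subgroup generated
by `s_i, s_j` and `v` shorter with neither `i` nor `j` as a right descent; then `ρ u e_i` is a
nonnegative combination of `e_i` and `e_j`, and induction applies to `v`. -/
theorem nonneg_geomRep_mulVec_e {w : W} {i : Fin 3}
    (h : cs.length w < cs.length (w * cs.simple i)) : 0 ≤ ρ w *ᵥ e i := by
  induction hn : cs.length w using Nat.strong_induction_on generalizing w i with
  | _ n ih =>
  rcases eq_or_ne w 1 with rfl | hw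
  · simpa using e_nonneg i
  obtain ⟨j, hj⟩ := cs.exists_rightDescent_of_ne_one hw
  have hji : j ≠ i := by
    rintro rfl
    exact lt_asymm h hj
  obtain ⟨v, ω, hω, rfl, hlen, hvi, hvj⟩ :=
    cs.exists_eq_mul_wordProd_not_isRightDescent i j w
  have hω0 : ω ≠ [] := by
    rintro rfl
    exact hvj (by simpa using hj)
  have hv : cs.length v < n := by
    have := List.length_pos_of_ne_nil hω0
    omega
  have hu : cs.length (cs.wordProd ω) < cs.length (cs.wordProd ω * cs.simple i) := by
    by_contra! hle
    have h1 := cs.length_mul_le v (cs.wordProd ω * cs.simple i)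
    have h2 := cs.length_wordProd_le ω
    have h3 := cs.length_mul_simple_ne (cs.wordProd ω) i
    rw [← mul_assoc] at h1
    omega
  obtain ⟨a, b, ha, hb, hab⟩ := exists_geomRep_mulVec_e_eq_of_mem_dihedral cs hji.symm
    (cs.wordProd_mem_of_coxeterMatrix_eq_four (apply_of_ne hji.symm) hω) hu
  have hvi' := ih _ hv (by rw [cs.not_isRightDescent_iff.mp hvi]; omega) rfl
  have hvj' := ih _ hv (by rw [cs.not_isRightDescent_iff.mp hvj]; omega) rfl
  rw [map_mul, ← mulVec_mulVec, hab, mulVec_add, mulVec_smul, mulVec_smul]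
  exact add_nonneg (smul_nonneg ha hvi') (smul_nonneg hb hvj')

theorem bilin_geomRep_mulVec (w : W) (x y : V) :
    bilin (ρ w *ᵥ x) (ρ w *ᵥ y) = bilin x y := by
  induction w using cs.simple_induction_left generalizing x y with
  | one => simp
  | mul_simple_left w i ih =>
    rw [map_mul, geomRep_simple, ← mulVec_mulVec, ← mulVec_mulVec, bilin_refl_mulVec, ih]

theorem geomRep_mul_simple_mulVec_e (w : W) (i : Fin 3) :
    ρ (w * cs.simple i) *ᵥ e i = -(ρ w *ᵥ e i) := by
  rw [map_mul, geomRep_simple, ← mulVec_mulVec, refl_mulVec_e_self, mulVec_neg]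

def IsRoot (γ : V) : Prop := ∃ w i, γ = ρ w *ᵥ e i

namespace IsRoot

variable {cs} {γ : V}

theorem geomRep_mulVec (hγ : IsRoot cs γ) (w : W) : IsRoot cs (ρ w *ᵥ γ) := by
  obtain ⟨u, i, rfl⟩ := hγ
  exact ⟨w * u, i, by rw [map_mul, mulVec_mulVec]⟩

theorem bilin_self (hγ : IsRoot cs γ) : bilin γ γ = 2 := by
  obtain ⟨u, i, rfl⟩ := hγ
  rw [bilin_geomRep_mulVec, bilin_e_self]

theorem ne_zero (hγ : IsRoot cs γ) : γ ≠ 0 := by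
  rintro rfl
  have h := hγ.bilin_self
  simp [bilin] at h

theorem nonneg_or_nonpos (hγ : IsRoot cs γ) : 0 ≤ γ ∨ γ ≤ 0 := by
  obtain ⟨w, i, rfl⟩ := hγ
  rcases (cs.length_mul_simple_ne w i).lt_or_gt with h | h
  · right
    rw [← neg_nonneg, ← geomRep_mul_simple_mulVec_e]
    exact nonneg_geomRep_mulVec_e cs (by rwa [cs.simple_mul_simple_cancel_right])
  · exact .inl (nonneg_geomRep_mulVec_e cs h)

theorem exists_geomRep_eq_reflect (hγ : IsRoot cs γ) : ∃ t : W, ∀ v, ρ t *ᵥ v = reflect γ v := by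
  obtain ⟨g, i, rfl⟩ := hγ
  refine ⟨g * cs.simple i * g⁻¹, fun v => ?_⟩
  have hv : v = ρ g *ᵥ (ρ g⁻¹ *ᵥ v) := by
    rw [mulVec_mulVec, ← map_mul, mul_inv_cancel, map_one, one_mulVec]
  rw [map_mul, map_mul, geomRep_simple, ← mulVec_mulVec, ← mulVec_mulVec,
    refl_mulVec_eq_reflect, reflect, mulVec_sub, mulVec_smul, ← hv, reflect, hv,
    bilin_geomRep_mulVec, ← hv]

theorem eq_e_of_not_nonneg_refl_mulVec (hγ : IsRoot cs γ) (h0 : 0 ≤ γ) {i : Fin 3}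
    (hi : ¬ 0 ≤ refl i *ᵥ γ) : γ = e i := by
  have hneg : refl i *ᵥ γ ≤ 0 := by
    have h := (hγ.geomRep_mulVec (cs.simple i)).nonneg_or_nonpos
    rw [geomRep_simple] at h
    exact h.resolve_left hi
  have hcoord : ∀ k, k ≠ i → γ k = 0 := fun k hk => by
    have hk' := hneg k
    rw [refl_mulVec_eq_reflect] at hk'
    exact le_antisymm (by simpa [reflect, e, hk] using hk') (h0 k)
  have hγi : γ = γ i • e i := by
    funext k
    by_cases hk : k = i
    · subst hk; simp [e]
    · simp [e, hk, hcoord k hk]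
  have hγi1 : γ i = 1 := by
    have h := hγ.bilin_self
    rw [hγi, bilin_smul_smul, bilin_e_self] at h
    have h' : (γ i - 1) * (2 * (γ i + 1)) = 0 := by linear_combination h
    have hpos : 0 < 2 * (γ i + 1) := by linarith [show 0 ≤ γ i from h0 i]
    exact sub_eq_zero.mp ((mul_eq_zero.mp h').resolve_right hpos.ne')
  rw [hγi, hγi1, one_smul]

end IsRoot

theorem e_isRoot (i : Fin 3) : IsRoot cs (e i) := ⟨1, i, by rw [map_one, one_mulVec]⟩

theorem nonneg_geomRep_mulVec_e_iff (w : W) (i : Fin 3) :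
    0 ≤ ρ w *ᵥ e i ↔ cs.length w < cs.length (w * cs.simple i) := by
  refine ⟨fun h => ?_, nonneg_geomRep_mulVec_e cs⟩
  by_contra! hle
  have hlt := lt_of_le_of_ne hle (cs.length_mul_simple_ne w i)
  have h' := nonneg_geomRep_mulVec_e cs (i := i) (w := w * cs.simple i)
    (by rwa [cs.simple_mul_simple_cancel_right])
  rw [geomRep_mul_simple_mulVec_e, neg_nonneg] at h'
  exact ((e_isRoot cs i).geomRep_mulVec w).ne_zero (le_antisymm h' h)

def inversionSet (w : W) : Set V := {γ | IsRoot cs γ ∧ 0 ≤ γ ∧ ¬ 0 ≤ ρ w *ᵥ γ}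

theorem inversionSet_simple_mul_subset (i : Fin 3) (w : W) :
    inversionSet cs (cs.simple i * w) ⊆ insert (ρ w⁻¹ *ᵥ e i) (inversionSet cs w) := by
  rintro γ ⟨hγ, h0, hw⟩
  by_cases h : 0 ≤ ρ w *ᵥ γ
  · left
    rw [map_mul, geomRep_simple, ← mulVec_mulVec] at hw
    rw [← (hγ.geomRep_mulVec w).eq_e_of_not_nonneg_refl_mulVec h hw, mulVec_mulVec, ← map_mul,
      inv_mul_cancel, map_one, one_mulVec]
  · exact .inr ⟨hγ, h0, h⟩

theorem finite_inversionSet (w : W) : (inversionSet cs w).Finite := by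
  induction w using cs.simple_induction_left with
  | one =>
    convert Set.finite_empty
    ext γ
    simp [inversionSet]
  | mul_simple_left w i ih => exact (ih.insert _).subset (inversionSet_simple_mul_subset cs i w)

/-- Otherwise the orbit of `α` under the product of the two reflections would be an infinite
family of positive roots, all made negative by `x`. -/
theorem nonneg_or_nonneg_of_bilin_le_neg_two {α β : V} (hα : IsRoot cs α) (hβ : IsRoot cs β)
    (hα0 : 0 ≤ α) (hβ0 : 0 ≤ β) (hαβ : bilin α β ≤ -2) (x : W) :
    0 ≤ ρ x *ᵥ α ∨ 0 ≤ ρ x *ᵥ β := by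
  by_contra! hneg
  have hxα := (hα.geomRep_mulVec x).nonneg_or_nonpos.resolve_left hneg.1
  have hxβ := (hβ.geomRep_mulVec x).nonneg_or_nonpos.resolve_left hneg.2
  obtain ⟨tα, htα⟩ := hα.exists_geomRep_eq_reflect
  obtain ⟨tβ, htβ⟩ := hβ.exists_geomRep_eq_reflect
  have hc : 2 ≤ -bilin α β := by linarith
  have hstep {a b : ℤ√2} (hb : 0 ≤ b) (hba : b < a) :=
    exists_reflect_reflect_eq_of_lt hα.bilin_self hβ.bilin_self (neg_neg _).symm hc hb hba
  set orbit : ℕ → V := fun n => ρ ((tα * tβ) ^ n) *ᵥ α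
  have horbit_succ (n : ℕ) : orbit (n + 1) = reflect α (reflect β (orbit n)) := by
    simp only [orbit, pow_succ', map_mul, ← mulVec_mulVec, htα, htβ]
  have hcone (n : ℕ) : ∃ a b : ℤ√2, 0 ≤ b ∧ b < a ∧ orbit n = a • α + b • β := by
    induction n with
    | zero => exact ⟨1, 0, le_rfl, zero_lt_one, by simp [orbit]⟩
    | succ n ih =>
      obtain ⟨a, b, hb, hba, h⟩ := ih
      obtain ⟨a', b', hb', hba', -, -, h'⟩ := hstep hb hba
      exact ⟨a', b', hb', hba', by rw [horbit_succ, h, h']⟩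
  have hmono : StrictMono orbit := strictMono_nat_of_lt_succ fun n => by
    obtain ⟨a, b, hb, hba, h⟩ := hcone n
    obtain ⟨a', b', -, -, haa', hbb', h'⟩ := hstep hb hba
    rw [horbit_succ, h, h', ← sub_pos,
      show a' • α + b' • β - (a • α + b • β) = (a' - a) • α + (b' - b) • β by module]
    exact add_pos_of_pos_of_nonneg (smul_pos (sub_pos.2 haa') (hα0.lt_of_ne hα.ne_zero.symm))
      (smul_nonneg (sub_nonneg.2 hbb') hβ0)
  have hmem (n : ℕ) : orbit n ∈ inversionSet cs x := by
    obtain ⟨a, b, hb, hba, h⟩ := hcone n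
    have hroot : IsRoot cs (orbit n) := hα.geomRep_mulVec _
    refine ⟨hroot, h ▸ add_nonneg (smul_nonneg (hb.trans hba.le) hα0) (smul_nonneg hb hβ0),
      fun hpos => (hroot.geomRep_mulVec x).ne_zero (le_antisymm ?_ hpos)⟩
    rw [h, mulVec_add, mulVec_smul, mulVec_smul]
    exact add_nonpos (smul_nonpos_of_nonneg_of_nonpos (hb.trans hba.le) hxα)
      (smul_nonpos_of_nonneg_of_nonpos hb hxβ)
  exact Set.infinite_of_injective_forall_mem hmono.injective hmem (finite_inversionSet cs x)

theorem refl_mulVec_e_nonneg {s t : Fin 3} (hst : s ≠ t) : 0 ≤ refl s *ᵥ e t := by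
  revert s t; decide

theorem bilin_e_refl_mulVec_e_le {r s t : Fin 3} (hrs : r ≠ s) (hrt : r ≠ t) (hst : s ≠ t) :
    bilin (e r) (refl s *ᵥ e t) ≤ -2 := by
  revert r s t; decide

theorem refl_mul_refl_mulVec_e_nonneg {r s t : Fin 3} (hrs : r ≠ s) (hrt : r ≠ t) (hst : s ≠ t) :
    0 ≤ (refl s * refl t) *ᵥ e r := by
  revert r s t; decide

theorem bilin_e_refl_mul_refl_mulVec_e_le {r s t : Fin 3} (hrs : r ≠ s) (hrt : r ≠ t)
    (hst : s ≠ t) : bilin (e r) ((refl s * refl t) *ᵥ e r) ≤ -2 := by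
  revert r s t; decide

theorem not_nonneg_refl_mul_refl_mulVec_e {r s : Fin 3} (hrs : r ≠ s) :
    ¬ 0 ≤ (refl s * refl r) *ᵥ e r := by
  revert r s; decide

theorem not_nonneg_refl_mul_refl_mul_refl_mulVec_e {r s t : Fin 3} (hrs : r ≠ s) (hrt : r ≠ t)
    (hst : s ≠ t) : ¬ 0 ≤ (refl t * refl s * refl r) *ᵥ e r := by
  revert r s t; decide

theorem nonneg_geomRep_mul_simple_mul_mulVec_e {i k : Fin 3} {g : W} (hg : 0 ≤ ρ g *ᵥ e k)
    (hB : bilin (e i) (ρ g *ᵥ e k) ≤ -2) {x : W} (hx : 0 ≤ ρ x *ᵥ e i) :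
    0 ≤ ρ (x * (cs.simple i * g)) *ᵥ e k := by
  have hβ : IsRoot cs (ρ g *ᵥ e k) := (e_isRoot cs k).geomRep_mulVec g
  rw [← mul_assoc, map_mul, ← mulVec_mulVec]
  refine (nonneg_or_nonneg_of_bilin_le_neg_two cs (e_isRoot cs i) hβ (e_nonneg i) hg hB
    (x * cs.simple i)).resolve_left fun h => ?_
  rw [geomRep_mul_simple_mulVec_e, neg_nonneg] at h
  exact ((e_isRoot cs i).geomRep_mulVec x).ne_zero (le_antisymm h hx)

theorem mem_simpleRoot_iff (z : W) (u : Fin 3) : z ∈ simpleRoot cs u ↔ 0 ≤ ρ z⁻¹ *ᵥ e u := by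
  rw [nonneg_geomRep_mulVec_e_iff, cs.length_inv, ← cs.length_inv (z⁻¹ * _),
    _root_.mul_inv_rev, cs.inv_simple, inv_inv]
  rfl

theorem mem_wmul_simpleRoot_iff (v y : W) (u : Fin 3) :
    y ∈ wmul v (simpleRoot cs u) ↔ 0 ≤ ρ (y⁻¹ * v) *ᵥ e u := by
  rw [mem_wmul, mem_simpleRoot_iff, _root_.mul_inv_rev, inv_inv]

theorem wmul_simpleRoot_ssubset {u u' : Fin 3} (v g : W)
    (hsub : ∀ x, 0 ≤ ρ x *ᵥ e u → 0 ≤ ρ (x * g) *ᵥ e u') (hg : ¬ 0 ≤ ρ g⁻¹ *ᵥ e u) :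
    wmul v (simpleRoot cs u) ⊂ wmul (v * g) (simpleRoot cs u') := by
  refine (Set.ssubset_iff_of_subset fun y hy => ?_).2 ⟨v * g, ?_, ?_⟩
  · rw [mem_wmul_simpleRoot_iff] at hy ⊢
    simpa only [mul_assoc] using hsub _ hy
  · rw [mem_wmul_simpleRoot_iff, inv_mul_cancel, map_one, one_mulVec]
    exact e_nonneg u'
  · rwa [mem_wmul_simpleRoot_iff, _root_.mul_inv_rev, mul_assoc, inv_mul_cancel, mul_one]

theorem wmul_simpleRoot_ssubset_mul_simple_mul_simple {r s t : Fin 3} (hrs : r ≠ s) (hrt : r ≠ t)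
    (hst : s ≠ t) (w : W) :
    wmul w (simpleRoot cs r) ⊂ wmul (w * (cs.simple r * cs.simple s)) (simpleRoot cs t) := by
  refine wmul_simpleRoot_ssubset cs w _
    (fun x => nonneg_geomRep_mul_simple_mul_mulVec_e cs ?_ ?_) ?_
  · rw [geomRep_simple]
    exact refl_mulVec_e_nonneg hst
  · rw [geomRep_simple]
    exact bilin_e_refl_mulVec_e_le hrs hrt hst
  · rw [_root_.mul_inv_rev, map_mul, cs.inv_simple, cs.inv_simple, geomRep_simple, geomRep_simple]
    exact not_nonneg_refl_mul_refl_mulVec_e hrs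

theorem wmul_simpleRoot_ssubset_mul_simple_mul_simple_mul_simple {r s t : Fin 3} (hrs : r ≠ s)
    (hrt : r ≠ t) (hst : s ≠ t) (w : W) :
    wmul w (simpleRoot cs r) ⊂
      wmul (w * (cs.simple r * (cs.simple s * cs.simple t))) (simpleRoot cs r) := by
  refine wmul_simpleRoot_ssubset cs w _
    (fun x => nonneg_geomRep_mul_simple_mul_mulVec_e cs ?_ ?_) ?_
  · rw [map_mul, geomRep_simple, geomRep_simple]
    exact refl_mul_refl_mulVec_e_nonneg hrs hrt hst
  · rw [map_mul, geomRep_simple, geomRep_simple]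
    exact bilin_e_refl_mul_refl_mulVec_e_le hrs hrt hst
  · simp only [_root_.mul_inv_rev, map_mul, cs.inv_simple, geomRep_simple, ← mul_assoc]
    exact not_nonneg_refl_mul_refl_mul_refl_mulVec_e hrs hrt hst

end M444

theorem stmt16_general (cs : CoxeterSystem M444 W)
    (r s t : Fin 3) (hrs : r ≠ s) (hrt : r ≠ t) (hst : s ≠ t) (w : W) :
    wmul w (simpleRoot cs r) ⊂
        wmul (w * cs.simple r * cs.simple s) (simpleRoot cs t) ∧
      wmul w (simpleRoot cs r) ⊂
        wmul (w * cs.simple r * cs.simple s * cs.simple t) (simpleRoot cs r) := by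
  simp only [mul_assoc]
  exact ⟨M444.wmul_simpleRoot_ssubset_mul_simple_mul_simple cs hrs hrt hst w,
    M444.wmul_simpleRoot_ssubset_mul_simple_mul_simple_mul_simple cs hrs hrt hst w⟩

/-- Lemma 2.18 of [BiConstruction]: if `(w, wr, wrs, wrst, wrstr)` is a minimal gallery of type
`(r,s,t,r)` in type `(4,4,4)` and `(β₁,β₂,β₃,β₄)` is the sequence of crossed roots, then
`β₁ ⊊ β₃` and `β₁ ⊊ β₄`. -/
theorem stmt16 (cs : CoxeterSystem M444 W)
    (r s t : Fin 3) (hrs : r ≠ s) (hrt : r ≠ t) (hst : s ≠ t) (w : W)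
    (hmin : cs.length (w * cs.simple r * cs.simple s * cs.simple t * cs.simple r) =
      cs.length w + 4) :
    wmul w (simpleRoot cs r) ⊂
        wmul (w * cs.simple r * cs.simple s) (simpleRoot cs t) ∧
      wmul w (simpleRoot cs r) ⊂
        wmul (w * cs.simple r * cs.simple s * cs.simple t) (simpleRoot cs r) :=
  stmt16_general cs r s t hrs hrt hst w
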